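/- arXiv:2206.06643 — 2 statements merged into one kernel-verified Lean document; each statement's English description precedes it below -/
import Mathlib

section
/- If X has the Weibull distribution W(λ,k) with λ,k>0, then for every t > 0, t·E[e^{-tX}] = E[(1/X)(k(X/λ)^k - k + 1)(1 - e^{-tX})]. -/
open MeasureTheory Real

/-- The Weibull density. -/
noncomputable def weibullPDF (lam k x : ℝ) : ℝ :=
  if 0 < x then (k / lam ^ k) * x ^ (k - 1) * Real.exp (-(x / lam) ^ k) else 0

/-- The Weibull distribution `W(lam, k)` as a measure on ℝ. -/
noncomputable def weibullMeasure (lam k : ℝ) : Measure ℝ :=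
  volume.withDensity fun x => ENNReal.ofReal (weibullPDF lam k x)

namespace WeibullAux

open Filter Set Topology
open scoped NNReal ENNReal

noncomputable def pdfFun (lam k x : ℝ) : ℝ :=
  (k / lam ^ k) * x ^ (k - 1) * Real.exp (-(x / lam) ^ k)

noncomputable def pdfDeriv (lam k x : ℝ) : ℝ :=
  (k / lam ^ k) * Real.exp (-(x / lam) ^ k) * (x ^ (k - 1) / x) * ((k - 1) - k * (x / lam) ^ k)

noncomputable def qFun (lam k x : ℝ) : ℝ :=
  (k / lam ^ k) * x ^ (k - 1) * (x / lam) ^ k * Real.exp (-(x / lam) ^ k)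

noncomputable def Hfun (lam k t x : ℝ) : ℝ := -(pdfFun lam k x * (1 - Real.exp (-t * x)))

noncomputable def Hderiv (lam k t x : ℝ) : ℝ :=
  -(pdfDeriv lam k x * (1 - Real.exp (-t * x)) + pdfFun lam k x * (t * Real.exp (-t * x)))

variable {lam k t : ℝ}

lemma hasDerivAt_u (hlam : 0 < lam) {x : ℝ} (hx : 0 < x) :
    HasDerivAt (fun y : ℝ => (y / lam) ^ k) (k * (x / lam) ^ k / x) x := by
  have hxl : (0:ℝ) < x / lam := div_pos hx hlam
  have h := ((hasDerivAt_id x).div_const lam).rpow_const (p := k) (Or.inl hxl.ne')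
  simp only [id_eq] at h
  convert h using 1
  rw [show (x / lam) ^ (k - 1) = (x / lam) ^ k / (x / lam) from by
    rw [Real.rpow_sub hxl, Real.rpow_one]]
  field_simp

lemma hasDerivAt_pdfFun (hlam : 0 < lam) {x : ℝ} (hx : 0 < x) :
    HasDerivAt (pdfFun lam k) (pdfDeriv lam k x) x := by
  have h1 : HasDerivAt (fun y : ℝ => y ^ (k - 1)) ((k - 1) * (x ^ (k - 1) / x)) x := by
    have h := Real.hasDerivAt_rpow_const (x := x) (p := k - 1) (Or.inl hx.ne')
    convert h using 1
    rw [show x ^ (k - 1 - 1) = x ^ (k - 1) / x from by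
      rw [Real.rpow_sub hx, Real.rpow_one]]
  have h2 := ((hasDerivAt_u (k := k) hlam hx).neg).exp
  have h := (h1.const_mul (k / lam ^ k)).mul h2
  refine h.congr_deriv ?_
  simp only [Pi.neg_apply]
  unfold pdfDeriv
  ring

lemma hasDerivAt_G1 (hlam : 0 < lam) {x : ℝ} (hx : 0 < x) :
    HasDerivAt (fun y : ℝ => -Real.exp (-(y / lam) ^ k)) (pdfFun lam k x) x := by
  have h := (((hasDerivAt_u (k := k) hlam hx).neg).exp).neg
  refine h.congr_deriv ?_
  simp only [Pi.neg_apply]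
  unfold pdfFun
  rw [Real.div_rpow hx.le hlam.le, Real.rpow_sub hx, Real.rpow_one]
  field_simp

lemma hasDerivAt_G2 (hlam : 0 < lam) {x : ℝ} (hx : 0 < x) :
    HasDerivAt (fun y : ℝ => -(((y / lam) ^ k + 1) * Real.exp (-(y / lam) ^ k)))
      (qFun lam k x) x := by
  have hu := hasDerivAt_u (k := k) hlam hx
  have h := ((hu.add_const 1).mul ((hu.neg).exp)).neg
  refine h.congr_deriv ?_
  simp only [Pi.neg_apply]
  unfold qFun
  rw [Real.div_rpow hx.le hlam.le, Real.rpow_sub hx, Real.rpow_one]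
  field_simp
  ring

lemma continuous_u (hk : 0 < k) : Continuous fun x : ℝ => (x / lam) ^ k :=
  (continuous_id.div_const lam).rpow_const fun _ => Or.inr hk.le

lemma tendsto_u_atTop (hlam : 0 < lam) (hk : 0 < k) :
    Tendsto (fun x : ℝ => (x / lam) ^ k) atTop atTop :=
  (tendsto_rpow_atTop hk).comp (tendsto_id.atTop_div_const hlam)

lemma tendsto_E_atTop (hlam : 0 < lam) (hk : 0 < k) :
    Tendsto (fun x : ℝ => Real.exp (-(x / lam) ^ k)) atTop (𝓝 0) :=
  Real.tendsto_exp_neg_atTop_nhds_zero.comp (tendsto_u_atTop hlam hk)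

lemma tendsto_pdfFun_atTop (hlam : 0 < lam) (hk : 0 < k) :
    Tendsto (pdfFun lam k) atTop (𝓝 0) := by
  have h0 : Tendsto (fun x : ℝ => (k / lam ^ k * lam ^ (k - 1)) *
      (((x / lam) ^ k) ^ ((k - 1) / k) * Real.exp (-1 * (x / lam) ^ k))) atTop (𝓝 0) := by
    have h := (tendsto_rpow_mul_exp_neg_mul_atTop_nhds_zero ((k - 1) / k) 1 one_pos).comp
      (tendsto_u_atTop hlam hk)
    simpa using h.const_mul (k / lam ^ k * lam ^ (k - 1))
  apply h0.congr'
  filter_upwards [Ioi_mem_atTop (0:ℝ)] with x hx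
  have hx0 : (0:ℝ) < x := hx
  have hxl : (0:ℝ) ≤ x / lam := (div_pos hx0 hlam).le
  have e0 : k * ((k - 1) / k) = k - 1 := by field_simp
  have e1 : ((x / lam) ^ k) ^ ((k - 1) / k) = (x / lam) ^ (k - 1) := by
    rw [← Real.rpow_mul hxl, e0]
  have e2 : lam ^ (k - 1) * (x / lam) ^ (k - 1) = x ^ (k - 1) := by
    rw [← Real.mul_rpow hlam.le hxl]
    congr 1
    field_simp
  simp only [e1, neg_one_mul]
  unfold pdfFun
  rw [← e2]
  ring

lemma tendsto_G2_atTop (hlam : 0 < lam) (hk : 0 < k) :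
    Tendsto (fun x : ℝ => -(((x / lam) ^ k + 1) * Real.exp (-(x / lam) ^ k))) atTop (𝓝 0) := by
  have h1 : Tendsto (fun x : ℝ => (x / lam) ^ k * Real.exp (-(x / lam) ^ k)) atTop (𝓝 0) := by
    have h := (tendsto_rpow_mul_exp_neg_mul_atTop_nhds_zero 1 1 one_pos).comp
      (tendsto_u_atTop hlam hk)
    refine h.congr fun x => ?_
    simp [Real.rpow_one]
  have h2 := tendsto_E_atTop hlam hk
  have h3 := (h1.add h2).neg
  simp only [add_zero, neg_zero] at h3
  exact h3.congr fun x => by ring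

lemma pdfFun_nonneg (hlam : 0 < lam) (hk : 0 < k) {x : ℝ} (hx : 0 ≤ x) :
    0 ≤ pdfFun lam k x := by
  unfold pdfFun
  have hC : 0 ≤ k / lam ^ k := div_nonneg hk.le (Real.rpow_nonneg hlam.le k)
  exact mul_nonneg (mul_nonneg hC (Real.rpow_nonneg hx _)) (Real.exp_pos _).le

lemma qFun_nonneg (hlam : 0 < lam) (hk : 0 < k) {x : ℝ} (hx : 0 ≤ x) :
    0 ≤ qFun lam k x := by
  unfold qFun
  have hC : 0 ≤ k / lam ^ k := div_nonneg hk.le (Real.rpow_nonneg hlam.le k)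
  exact mul_nonneg (mul_nonneg (mul_nonneg hC (Real.rpow_nonneg hx _))
    (Real.rpow_nonneg (div_nonneg hx hlam.le) _)) (Real.exp_pos _).le

lemma integrableOn_pdfFun (hlam : 0 < lam) (hk : 0 < k) :
    IntegrableOn (pdfFun lam k) (Ioi 0) := by
  have hcont : ContinuousWithinAt (fun y : ℝ => -Real.exp (-(y / lam) ^ k)) (Ici 0) 0 :=
    ((Real.continuous_exp.comp (continuous_u hk).neg).neg).continuousWithinAt
  exact integrableOn_Ioi_deriv_of_nonneg hcont (fun x hx => hasDerivAt_G1 hlam hx)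
    (fun x hx => pdfFun_nonneg hlam hk (le_of_lt hx)) (tendsto_E_atTop hlam hk).neg

lemma integrableOn_qFun (hlam : 0 < lam) (hk : 0 < k) :
    IntegrableOn (qFun lam k) (Ioi 0) := by
  have hcont : ContinuousWithinAt
      (fun y : ℝ => -(((y / lam) ^ k + 1) * Real.exp (-(y / lam) ^ k))) (Ici 0) 0 :=
    (((continuous_u hk).add continuous_const).mul
      (Real.continuous_exp.comp (continuous_u hk).neg)).neg.continuousWithinAt
  exact integrableOn_Ioi_deriv_of_nonneg hcont (fun x hx => hasDerivAt_G2 hlam hx)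
    (fun x hx => qFun_nonneg hlam hk (le_of_lt hx)) (tendsto_G2_atTop hlam hk)

lemma continuousOn_rpow_sub : ContinuousOn (fun x : ℝ => x ^ (k - 1)) (Ioi 0) := fun x hx =>
  (Real.continuousAt_rpow_const x (k - 1) (Or.inl (ne_of_gt hx))).continuousWithinAt

lemma continuousOn_pdfFun (hk : 0 < k) : ContinuousOn (pdfFun lam k) (Ioi 0) := by
  have cE : Continuous fun x : ℝ => Real.exp (-(x / lam) ^ k) :=
    Real.continuous_exp.comp (continuous_u hk).neg
  unfold pdfFun
  exact (continuousOn_const.mul continuousOn_rpow_sub).mul cE.continuousOn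

lemma continuousOn_Hderiv (hk : 0 < k) : ContinuousOn (Hderiv lam k t) (Ioi 0) := by
  have cE : Continuous fun x : ℝ => Real.exp (-(x / lam) ^ k) :=
    Real.continuous_exp.comp (continuous_u hk).neg
  have cT : Continuous fun x : ℝ => Real.exp (-t * x) :=
    Real.continuous_exp.comp (continuous_const.mul continuous_id)
  unfold Hderiv pdfDeriv pdfFun
  apply ContinuousOn.neg
  apply ContinuousOn.add
  · exact (((continuousOn_const.mul cE.continuousOn).mul
      (continuousOn_rpow_sub.div continuousOn_id fun x hx => ne_of_gt hx)).mul
      (continuousOn_const.sub (continuousOn_const.mul (continuous_u hk).continuousOn))).mul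
      (continuousOn_const.sub cT.continuousOn)
  · exact ((continuousOn_const.mul continuousOn_rpow_sub).mul cE.continuousOn).mul
      (continuousOn_const.mul cT.continuousOn)

lemma one_sub_exp_le (s : ℝ) : 1 - Real.exp (-s) ≤ s := by
  have := Real.add_one_le_exp (-s)
  linarith

lemma integrableOn_pdfExp (hlam : 0 < lam) (hk : 0 < k) (ht : 0 < t) :
    IntegrableOn (fun x : ℝ => pdfFun lam k x * Real.exp (-t * x)) (Ioi 0) := by
  refine Integrable.mono (integrableOn_pdfFun hlam hk)
    (((continuousOn_pdfFun hk).mul (Real.continuous_exp.comp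
      (continuous_const.mul continuous_id)).continuousOn).aestronglyMeasurable
      measurableSet_Ioi) ?_
  rw [ae_restrict_iff' measurableSet_Ioi]
  refine ae_of_all _ fun x hx => ?_
  have hx0 : (0:ℝ) < x := hx
  have hp := pdfFun_nonneg hlam hk hx0.le
  have he0 : (0:ℝ) < Real.exp (-t * x) := Real.exp_pos _
  have he1 : Real.exp (-t * x) ≤ 1 := by
    rw [Real.exp_le_one_iff]
    nlinarith
  rw [Real.norm_eq_abs, Real.norm_eq_abs, abs_of_nonneg (mul_nonneg hp he0.le),
    abs_of_nonneg hp]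
  nlinarith

lemma integrableOn_Hderiv (hlam : 0 < lam) (hk : 0 < k) (ht : 0 < t) :
    IntegrableOn (Hderiv lam k t) (Ioi 0) := by
  have hgint : IntegrableOn
      (fun x => t * (k * qFun lam k x + (|k - 1| + 1) * pdfFun lam k x)) (Ioi 0) :=
    (((integrableOn_qFun hlam hk).const_mul k).add
      ((integrableOn_pdfFun hlam hk).const_mul (|k - 1| + 1))).const_mul t
  refine Integrable.mono hgint ((continuousOn_Hderiv hk).aestronglyMeasurable measurableSet_Ioi) ?_
  rw [ae_restrict_iff' measurableSet_Ioi]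
  refine ae_of_all _ fun x hx => ?_
  have hx0 : (0:ℝ) < x := hx
  have hC : 0 ≤ k / lam ^ k := div_nonneg hk.le (Real.rpow_nonneg hlam.le k)
  have hr : 0 ≤ x ^ (k - 1) := Real.rpow_nonneg hx0.le _
  have hu : 0 ≤ (x / lam) ^ k := Real.rpow_nonneg (div_pos hx0 hlam).le _
  have hE0 : (0:ℝ) < Real.exp (-(x / lam) ^ k) := Real.exp_pos _
  have hE1 : Real.exp (-(x / lam) ^ k) ≤ 1 := by
    rw [Real.exp_le_one_iff]; linarith
  have he0 : (0:ℝ) < Real.exp (-t * x) := Real.exp_pos _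
  have he1 : Real.exp (-t * x) ≤ 1 := by
    rw [Real.exp_le_one_iff]; nlinarith
  have hsub : 1 - Real.exp (-t * x) ≤ t * x := by
    have := one_sub_exp_le (t * x)
    rw [neg_mul]
    linarith
  have hsub0 : 0 ≤ 1 - Real.exp (-t * x) := by linarith
  have hp := pdfFun_nonneg hlam hk hx0.le
  -- bound |pdfDeriv|
  have hA : 0 ≤ k / lam ^ k * Real.exp (-(x / lam) ^ k) * (x ^ (k - 1) / x) :=
    mul_nonneg (mul_nonneg hC hE0.le) (div_nonneg hr hx0.le)
  have hpd : |pdfDeriv lam k x| ≤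
      (k / lam ^ k * Real.exp (-(x / lam) ^ k) * (x ^ (k - 1) / x)) * (|k - 1| + k * (x / lam) ^ k) := by
    unfold pdfDeriv
    rw [abs_mul, abs_of_nonneg hA]
    refine mul_le_mul_of_nonneg_left ?_ hA
    calc |k - 1 - k * (x / lam) ^ k| ≤ |k - 1| + |k * (x / lam) ^ k| := abs_sub _ _
      _ = |k - 1| + k * (x / lam) ^ k := by
          rw [abs_of_nonneg (mul_nonneg hk.le hu)]
  have key : |Hderiv lam k t x| ≤ t * (k * qFun lam k x + (|k - 1| + 1) * pdfFun lam k x) := by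
    have h1 : |Hderiv lam k t x| ≤ |pdfDeriv lam k x| * (1 - Real.exp (-t * x)) +
        pdfFun lam k x * (t * Real.exp (-t * x)) := by
      unfold Hderiv
      rw [abs_neg]
      refine (abs_add_le _ _).trans ?_
      rw [abs_mul, abs_of_nonneg hsub0, abs_mul, abs_of_nonneg hp,
        abs_of_nonneg (mul_nonneg ht.le he0.le)]
    have h2 : |pdfDeriv lam k x| * (1 - Real.exp (-t * x)) ≤
        ((k / lam ^ k * Real.exp (-(x / lam) ^ k) * (x ^ (k - 1) / x)) *
          (|k - 1| + k * (x / lam) ^ k)) * (t * x) :=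
      mul_le_mul hpd hsub hsub0 (mul_nonneg hA (by positivity))
    have h3 : pdfFun lam k x * (t * Real.exp (-t * x)) ≤ pdfFun lam k x * t := by
      refine mul_le_mul_of_nonneg_left ?_ hp
      nlinarith
    have h4 : ((k / lam ^ k * Real.exp (-(x / lam) ^ k) * (x ^ (k - 1) / x)) *
          (|k - 1| + k * (x / lam) ^ k)) * (t * x) + pdfFun lam k x * t =
        t * (k * qFun lam k x + (|k - 1| + 1) * pdfFun lam k x) := by
      unfold qFun pdfFun
      field_simp
      ring
    linarith
  have hgx : 0 ≤ t * (k * qFun lam k x + (|k - 1| + 1) * pdfFun lam k x) := by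
    have hq := qFun_nonneg hlam hk hx0.le
    have habs : (0:ℝ) ≤ |k - 1| + 1 := by positivity
    exact mul_nonneg ht.le (add_nonneg (mul_nonneg hk.le hq) (mul_nonneg habs hp))
  rw [Real.norm_eq_abs, Real.norm_eq_abs, abs_of_nonneg hgx]
  exact key

lemma Hfun_zero : Hfun lam k t 0 = 0 := by
  simp [Hfun]

lemma tendsto_Hfun_atTop (hlam : 0 < lam) (hk : 0 < k) (ht : 0 < t) :
    Tendsto (Hfun lam k t) atTop (𝓝 0) := by
  refine squeeze_zero_norm' (a := pdfFun lam k) ?_ (tendsto_pdfFun_atTop hlam hk)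
  filter_upwards [Ioi_mem_atTop (0:ℝ)] with x hx
  have hx0 : (0:ℝ) < x := hx
  have hp := pdfFun_nonneg hlam hk hx0.le
  have he0 : (0:ℝ) < Real.exp (-t * x) := Real.exp_pos _
  have he1 : Real.exp (-t * x) ≤ 1 := by
    rw [Real.exp_le_one_iff]; nlinarith
  have hsub0 : 0 ≤ 1 - Real.exp (-t * x) := by linarith
  rw [Hfun, Real.norm_eq_abs, abs_neg, abs_of_nonneg (mul_nonneg hp hsub0)]
  nlinarith

lemma continuousWithinAt_Hfun (hlam : 0 < lam) (hk : 0 < k) (ht : 0 < t) :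
    ContinuousWithinAt (Hfun lam k t) (Ici 0) 0 := by
  have hb : Tendsto (fun x : ℝ => (k / lam ^ k * t) * x ^ k) (𝓝[Ici 0] 0) (𝓝 0) := by
    have hca : ContinuousAt (fun x : ℝ => x ^ k) 0 :=
      Real.continuousAt_rpow_const 0 k (Or.inr hk.le)
    have h := (hca.tendsto.const_mul (k / lam ^ k * t)).mono_left
      (nhdsWithin_le_nhds (s := Ici (0:ℝ)))
    simpa [Real.zero_rpow hk.ne'] using h
  have hsq : Tendsto (Hfun lam k t) (𝓝[Ici 0] 0) (𝓝 0) := by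
    apply squeeze_zero_norm' _ hb
    filter_upwards [self_mem_nhdsWithin] with x (hx : x ∈ Ici 0)
    rcases eq_or_lt_of_le (mem_Ici.mp hx) with h0 | hx0
    · rw [← h0]
      rw [Hfun_zero]
      simp [Real.zero_rpow hk.ne']
    · have hC : 0 ≤ k / lam ^ k := div_nonneg hk.le (Real.rpow_nonneg hlam.le k)
      have hr : 0 ≤ x ^ (k - 1) := Real.rpow_nonneg hx0.le _
      have hu : 0 ≤ (x / lam) ^ k := Real.rpow_nonneg (div_pos hx0 hlam).le _
      have hE0 : (0:ℝ) < Real.exp (-(x / lam) ^ k) := Real.exp_pos _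
      have hE1 : Real.exp (-(x / lam) ^ k) ≤ 1 := by
        rw [Real.exp_le_one_iff]; linarith
      have he0 : (0:ℝ) < Real.exp (-t * x) := Real.exp_pos _
      have he1 : Real.exp (-t * x) ≤ 1 := by
        rw [Real.exp_le_one_iff]; nlinarith
      have hsub : 1 - Real.exp (-t * x) ≤ t * x := by
        have := one_sub_exp_le (t * x)
        rw [neg_mul]; linarith
      have hsub0 : 0 ≤ 1 - Real.exp (-t * x) := by linarith
      have hp := pdfFun_nonneg hlam hk hx0.le
      rw [Hfun, Real.norm_eq_abs, abs_neg, abs_of_nonneg (mul_nonneg hp hsub0)]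
      have hrk : x ^ (k - 1) * x = x ^ k := by
        rw [← Real.rpow_add_one hx0.ne' (k - 1)]
        norm_num
      calc pdfFun lam k x * (1 - Real.exp (-t * x))
          ≤ (k / lam ^ k * x ^ (k - 1)) * (t * x) := by
            unfold pdfFun
            have h1 : (k / lam ^ k) * x ^ (k - 1) * Real.exp (-(x / lam) ^ k) ≤
                k / lam ^ k * x ^ (k - 1) := mul_le_of_le_one_right (mul_nonneg hC hr) hE1
            exact mul_le_mul h1 hsub hsub0 (by positivity)
        _ = (k / lam ^ k * t) * x ^ k := by rw [← hrk]; ring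
  show Tendsto (Hfun lam k t) (𝓝[Ici 0] 0) (𝓝 (Hfun lam k t 0))
  rw [Hfun_zero]
  exact hsq

lemma hasDerivAt_Hfun (hlam : 0 < lam) {x : ℝ} (hx : 0 < x) :
    HasDerivAt (Hfun lam k t) (Hderiv lam k t x) x := by
  have hw : HasDerivAt (fun y : ℝ => 1 - Real.exp (-t * y)) (t * Real.exp (-t * x)) x := by
    have h := (((hasDerivAt_id x).const_mul (-t)).exp).const_sub 1
    simp only [id_eq] at h
    refine h.congr_deriv ?_
    ring
  have h := ((hasDerivAt_pdfFun (k := k) hlam hx).mul hw).neg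
  exact h

lemma integral_Hderiv (hlam : 0 < lam) (hk : 0 < k) (ht : 0 < t) :
    ∫ x in Ioi (0:ℝ), Hderiv lam k t x = 0 := by
  rw [integral_Ioi_of_hasDerivAt_of_tendsto (continuousWithinAt_Hfun hlam hk ht)
    (fun x hx => hasDerivAt_Hfun hlam hx) (integrableOn_Hderiv hlam hk ht)
    (tendsto_Hfun_atTop hlam hk ht), Hfun_zero, sub_zero]

lemma weibullPDF_nonneg (hlam : 0 < lam) (hk : 0 < k) (x : ℝ) : 0 ≤ weibullPDF lam k x := by
  unfold weibullPDF
  split_ifs with h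
  · exact pdfFun_nonneg hlam hk h.le
  · exact le_refl 0

lemma measurable_weibullPDF (hk : 0 < k) : Measurable (weibullPDF lam k) := by
  have heq : weibullPDF lam k = fun x =>
      if 0 < x then (k / lam ^ k) * Real.exp (Real.log x * (k - 1)) * Real.exp (-(x / lam) ^ k)
      else 0 := by
    funext x
    unfold weibullPDF
    by_cases h : 0 < x
    · rw [if_pos h, if_pos h, Real.rpow_def_of_pos h]
    · rw [if_neg h, if_neg h]
  rw [heq]
  refine Measurable.ite ?_ ?_ measurable_const
  · exact measurableSet_Ioi
  · exact (measurable_const.mul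
      (Real.measurable_exp.comp (Real.measurable_log.mul measurable_const))).mul
      (Real.continuous_exp.comp (continuous_u hk).neg).measurable

lemma transport (hlam : 0 < lam) (hk : 0 < k)
    {Ω : Type*} [MeasurableSpace Ω] (P : Measure Ω)
    (X : Ω → ℝ) (hX : Measurable X)
    (hlaw : Measure.map X P = weibullMeasure lam k)
    (φ : ℝ → ℝ) (hφ : Measurable φ) :
    ∫ ω, φ (X ω) ∂P = ∫ x in Ioi (0:ℝ), pdfFun lam k x * φ x := by
  rw [← integral_map hX.aemeasurable hφ.aestronglyMeasurable, hlaw]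
  unfold weibullMeasure
  rw [show (fun x => ENNReal.ofReal (weibullPDF lam k x)) =
    (fun x => ((Real.toNNReal (weibullPDF lam k x) : ℝ≥0) : ℝ≥0∞)) from rfl]
  rw [integral_withDensity_eq_integral_smul (measurable_weibullPDF hk).real_toNNReal φ]
  rw [← setIntegral_eq_integral_of_forall_compl_eq_zero
      (s := Ioi 0) (f := fun x => Real.toNNReal (weibullPDF lam k x) • φ x)
      (fun x hx => by
        have h0 : weibullPDF lam k x = 0 := if_neg (by simpa using hx)
        simp [h0])]
  apply setIntegral_congr_fun measurableSet_Ioi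
  intro x hx
  have hx0 : (0:ℝ) < x := hx
  have h1 : weibullPDF lam k x = pdfFun lam k x := if_pos hx0
  show (weibullPDF lam k x).toNNReal • φ x = pdfFun lam k x * φ x
  rw [NNReal.smul_def, h1, Real.coe_toNNReal _ (pdfFun_nonneg hlam hk hx0.le), smul_eq_mul]

end WeibullAux

open WeibullAux Set Filter

/-- the Laplace-transform identity characterizing the Weibull law (direct part). -/
theorem weibull_laplace_identity
    {Ω : Type*} [MeasurableSpace Ω] (P : Measure Ω) [IsProbabilityMeasure P]
    (lam k : ℝ) (hlam : 0 < lam) (hk : 0 < k)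
    (X : Ω → ℝ) (hX : Measurable X)
    (hlaw : Measure.map X P = weibullMeasure lam k) :
    ∀ t : ℝ, 0 < t →
      t * ∫ ω, Real.exp (-t * X ω) ∂P =
        ∫ ω, (1 / X ω) * (k * (X ω / lam) ^ k - k + 1) * (1 - Real.exp (-t * X ω)) ∂P := by
  intro t ht
  have hφL : Measurable fun x : ℝ => Real.exp (-t * x) :=
    (Real.continuous_exp.comp (continuous_const.mul continuous_id)).measurable
  have hφR : Measurable fun x : ℝ =>
      (1 / x) * (k * (x / lam) ^ k - k + 1) * (1 - Real.exp (-t * x)) := by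
    have m1 : Measurable fun x : ℝ => 1 / x := by
      simpa [one_div] using (measurable_inv : Measurable fun x : ℝ => x⁻¹)
    have m2 : Measurable fun x : ℝ => k * (x / lam) ^ k - k + 1 :=
      (((continuous_u hk).measurable.const_mul k).sub measurable_const).add measurable_const
    exact (m1.mul m2).mul (measurable_const.sub hφL)
  have hL : ∫ ω, Real.exp (-t * X ω) ∂P =
      ∫ x in Ioi (0:ℝ), pdfFun lam k x * Real.exp (-t * x) :=
    transport hlam hk P X hX hlaw _ hφL
  have hR : ∫ ω, (1 / X ω) * (k * (X ω / lam) ^ k - k + 1) * (1 - Real.exp (-t * X ω)) ∂P =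
      ∫ x in Ioi (0:ℝ), pdfFun lam k x *
        ((1 / x) * (k * (x / lam) ^ k - k + 1) * (1 - Real.exp (-t * x))) :=
    transport hlam hk P X hX hlaw _ hφR
  rw [hL, hR]
  have hIdent : ∀ x ∈ Ioi (0:ℝ),
      pdfFun lam k x * ((1 / x) * (k * (x / lam) ^ k - k + 1) * (1 - Real.exp (-t * x))) =
        Hderiv lam k t x + t * (pdfFun lam k x * Real.exp (-t * x)) := by
    intro x hx
    unfold Hderiv pdfDeriv pdfFun
    ring
  rw [setIntegral_congr_fun measurableSet_Ioi hIdent]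
  rw [integral_add (integrableOn_Hderiv hlam hk ht)
    ((integrableOn_pdfExp hlam hk ht).const_mul t)]
  rw [integral_const_mul, integral_Hderiv hlam hk ht, zero_add]
end

section
/- Define κ_f(x) = |f'(x)·min(F(x), 1-F(x)) / f(x)²| for the Weibull(λ,k) density f and cdf F. Then lim_{x→0} κ_f(x) = |(k-1)/k| and lim_{x→∞} κ_f(x) = 1; consequently sup_{x∈(0,∞)} κ_f(x) < ∞. -/
open MeasureTheory Real Filter
noncomputable def Gk (k t : ℝ) : ℝ :=
  |(k - 1 - k * t) * min (1 - Real.exp (-t)) (Real.exp (-t)) / (k * t * Real.exp (-t))|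

lemma kappa_eq (lam k : ℝ) (hlam : 0 < lam) (hk : 0 < k)
    (F f κ : ℝ → ℝ)
    (hF : ∀ x, 0 < x → F x = 1 - Real.exp (-(x / lam) ^ k))
    (hf : ∀ x, 0 < x → f x = (k / lam ^ k) * x ^ (k - 1) * Real.exp (-(x / lam) ^ k))
    (hκ : ∀ x, 0 < x → κ x = |deriv f x * min (F x) (1 - F x) / (f x) ^ 2|)
    (x : ℝ) (hx : 0 < x) : κ x = Gk k ((x / lam) ^ k) := by
  have hxl : 0 < x / lam := div_pos hx hlam
  have hu : (0:ℝ) < (x / lam) ^ k := Real.rpow_pos_of_pos hxl k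
  have hlamk : (0:ℝ) < lam ^ k := Real.rpow_pos_of_pos hlam k
  set u : ℝ := (x / lam) ^ k with hu_def
  set E : ℝ := Real.exp (-u) with hE_def
  have hEpos : 0 < E := Real.exp_pos _
  -- derivative computation
  have hdconst : HasDerivAt (fun y : ℝ => y / lam) (1 / lam) x := by
    simpa using (hasDerivAt_id x).div_const lam
  have hinner : HasDerivAt (fun y : ℝ => (y / lam) ^ k)
      (k * (x / lam) ^ (k - 1) * (1 / lam)) x := by
    have h := (Real.hasDerivAt_rpow_const (x := x / lam) (p := k) (Or.inl hxl.ne')).comp x hdconst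
    simpa [mul_assoc, Function.comp_def] using h
  have hexp : HasDerivAt (fun y : ℝ => Real.exp (-(y / lam) ^ k))
      (Real.exp (-(x / lam) ^ k) * -(k * (x / lam) ^ (k - 1) * (1 / lam))) x :=
    (Real.hasDerivAt_exp _).comp x hinner.neg
  have hpow : HasDerivAt (fun y : ℝ => y ^ (k - 1)) ((k - 1) * x ^ (k - 1 - 1)) x :=
    Real.hasDerivAt_rpow_const (Or.inl hx.ne')
  have hform : HasDerivAt (fun y : ℝ => (k / lam ^ k) * y ^ (k - 1) * Real.exp (-(y / lam) ^ k))
      ((k / lam ^ k) * ((k - 1) * x ^ (k - 1 - 1)) * Real.exp (-(x / lam) ^ k)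
        + (k / lam ^ k) * x ^ (k - 1) *
          (Real.exp (-(x / lam) ^ k) * -(k * (x / lam) ^ (k - 1) * (1 / lam)))) x := by
    exact (hpow.const_mul (k / lam ^ k)).mul hexp
  have hfeq : f =ᶠ[nhds x] fun y => (k / lam ^ k) * y ^ (k - 1) * Real.exp (-(y / lam) ^ k) := by
    filter_upwards [Ioi_mem_nhds hx] with y hy using hf y hy
  have hderiv : deriv f x =
      (k / lam ^ k) * ((k - 1) * x ^ (k - 1 - 1)) * E
        + (k / lam ^ k) * x ^ (k - 1) * (E * -(k * (x / lam) ^ (k - 1) * (1 / lam))) := by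
    rw [hfeq.deriv_eq, hform.deriv]
  -- rpow algebra identities
  have A1 : x ^ (k - 1 - 1) = x ^ (k - 1) / x := by
    rw [Real.rpow_sub hx, Real.rpow_one]
  have A2 : (x / lam) ^ (k - 1) = u * lam / x := by
    rw [Real.rpow_sub hxl, Real.rpow_one, ← hu_def]
    field_simp
  have A3 : x ^ (k - 1) = x ^ k / x := by
    rw [Real.rpow_sub hx, Real.rpow_one]
  have A4 : u = x ^ k / lam ^ k := by
    rw [hu_def, Real.div_rpow hx.le hlam.le]
  have hfx : f x = k * u / x * E := by
    rw [hf x hx, ← hE_def, A3, A4]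
    field_simp
  have hD : deriv f x = (k - 1 - k * u) / x * f x := by
    rw [hderiv, hfx, A1, A2, A3, A4]
    have hxne : x ≠ 0 := hx.ne'
    have hlne : lam ≠ 0 := hlam.ne'
    field_simp
    ring
  rw [hκ x hx, hD, hfx, hF x hx, ← hu_def, ← hE_def, Gk]
  have h1 : 1 - (1 - E) = E := by ring
  rw [h1]
  congr 1
  have hxne : x ≠ 0 := hx.ne'
  have hune : u ≠ 0 := hu.ne'
  have hEne : E ≠ 0 := hEpos.ne'
  field_simp
  ring

lemma slope_lim : Tendsto (fun t : ℝ => (1 - Real.exp (-t)) / t)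
    (nhdsWithin 0 (Set.Ioi 0)) (nhds 1) := by
  have h : HasDerivAt (fun t : ℝ => Real.exp (-t)) (-1) 0 := by
    simpa [Function.comp_def] using (Real.hasDerivAt_exp (-0:ℝ)).comp 0 (hasDerivAt_neg 0)
  rw [hasDerivAt_iff_tendsto_slope] at h
  have h2 : Tendsto (slope (fun t : ℝ => Real.exp (-t)) 0)
      (nhdsWithin 0 (Set.Ioi 0)) (nhds (-1)) :=
    h.mono_left (nhdsWithin_mono 0 (fun t ht => ne_of_gt ht))
  have h3 := h2.neg
  rw [show -(-1 : ℝ) = 1 by norm_num] at h3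
  refine h3.congr (fun t => ?_)
  simp [slope, neg_div, div_eq_inv_mul]
  ring_nf

lemma Gk_lim_zero (k : ℝ) (hk : 0 < k) :
    Tendsto (Gk k) (nhdsWithin 0 (Set.Ioi 0)) (nhds |(k - 1) / k|) := by
  have hmain : Tendsto (fun t => (k - 1 - k * t) * ((1 - Real.exp (-t)) / t) / (k * Real.exp (-t)))
      (nhdsWithin 0 (Set.Ioi 0)) (nhds ((k - 1) / k)) := by
    have h1 : Tendsto (fun t : ℝ => k - 1 - k * t) (nhdsWithin 0 (Set.Ioi 0)) (nhds (k - 1)) := by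
      have : Continuous (fun t : ℝ => k - 1 - k * t) := by continuity
      simpa using (this.tendsto 0).mono_left nhdsWithin_le_nhds
    have h2 : Tendsto (fun t : ℝ => k * Real.exp (-t)) (nhdsWithin 0 (Set.Ioi 0)) (nhds k) := by
      have : Continuous (fun t : ℝ => k * Real.exp (-t)) := by continuity
      simpa using (this.tendsto 0).mono_left nhdsWithin_le_nhds
    have := (h1.mul slope_lim).div h2 hk.ne'
    simpa [Pi.div_def] using this
  have habs := (continuous_abs.tendsto _).comp hmain
  refine habs.congr' ?_
  have hmem : Set.Ioo (0:ℝ) (Real.log 2) ∈ nhdsWithin 0 (Set.Ioi 0) :=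
    Ioo_mem_nhdsGT_of_mem ⟨le_refl 0, Real.log_pos (by norm_num)⟩
  filter_upwards [hmem] with t ht
  have ht0 : 0 < t := ht.1
  have hE : (1:ℝ)/2 < Real.exp (-t) := by
    have h1 : Real.exp (-Real.log 2) < Real.exp (-t) := Real.exp_lt_exp.mpr (by linarith [ht.2])
    have h2 : Real.exp (-Real.log 2) = 1/2 := by
      rw [Real.exp_neg, Real.exp_log (by norm_num : (0:ℝ) < 2)]
      norm_num
    linarith
  have hmin : min (1 - Real.exp (-t)) (Real.exp (-t)) = 1 - Real.exp (-t) := by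
    apply min_eq_left; linarith
  have htne : t ≠ 0 := ht0.ne'
  have hEne : Real.exp (-t) ≠ 0 := (Real.exp_pos _).ne'
  simp only [Function.comp]
  rw [Gk, hmin]
  congr 1
  field_simp

lemma Gk_lim_top (k : ℝ) (hk : 0 < k) : Tendsto (Gk k) atTop (nhds 1) := by
  have hmain : Tendsto (fun t : ℝ => (k - 1) / (k * t) - 1) atTop (nhds (-1)) := by
    have h1 : Tendsto (fun t : ℝ => (k - 1) / (k * t)) atTop (nhds 0) := by
      exact tendsto_const_nhds.div_atTop (tendsto_id.const_mul_atTop hk)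
    simpa using h1.sub tendsto_const_nhds
  have habs := (continuous_abs.tendsto _).comp hmain
  rw [show |(-1:ℝ)| = 1 by norm_num] at habs
  refine habs.congr' ?_
  filter_upwards [eventually_ge_atTop (1:ℝ)] with t ht
  have ht0 : 0 < t := by linarith
  have hEhalf : Real.exp (-t) ≤ 1/2 := by
    have h1 : Real.exp (-t) ≤ Real.exp (-1) := Real.exp_le_exp.mpr (by linarith)
    have h2 : Real.exp (-1) ≤ 1/2 := by
      have h3 : (2:ℝ) ≤ Real.exp 1 := by linarith [Real.add_one_le_exp (1:ℝ)]
      rw [Real.exp_neg, show (1:ℝ)/2 = 2⁻¹ by norm_num]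
      exact inv_anti₀ (by norm_num) h3
    linarith
  have hmin : min (1 - Real.exp (-t)) (Real.exp (-t)) = Real.exp (-t) := by
    apply min_eq_right; linarith
  have hEne : Real.exp (-t) ≠ 0 := (Real.exp_pos _).ne'
  simp only [Function.comp]
  rw [Gk, hmin]
  congr 1
  field_simp

lemma Gk_bound (k : ℝ) (hk : 0 < k) (t : ℝ) (ht : 0 < t) :
    Gk k t ≤ (|k - 1| + k) * Real.exp 1 / k + (|k - 1| / k + 1) := by
  set E : ℝ := Real.exp (-t) with hE_def
  have hEpos : 0 < E := Real.exp_pos _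
  have hE1 : E ≤ 1 := Real.exp_le_one_iff.mpr (by linarith)
  have hm0 : 0 ≤ min (1 - E) E := le_min (by linarith) hEpos.le
  have hden : 0 < k * t * E := by positivity
  have hGeq : Gk k t = |k - 1 - k * t| * min (1 - E) E / (k * t * E) := by
    rw [Gk, abs_div, abs_mul, abs_of_nonneg hm0, abs_of_pos hden]
  have hnum : |k - 1 - k * t| ≤ |k - 1| + k * t := by
    calc |k - 1 - k * t| ≤ |k - 1| + |k * t| := abs_sub _ _
    _ = |k - 1| + k * t := by rw [abs_of_pos (show (0:ℝ) < k * t by positivity)]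
  have hsub : 1 - E ≤ t := by
    have := Real.add_one_le_exp (-t)
    linarith
  rcases le_or_gt t 1 with h1 | h1
  · -- t ≤ 1 case
    have hstep : Gk k t ≤ |k - 1 - k * t| * t / (k * t * E) := by
      rw [hGeq]
      gcongr
      exact le_trans (min_le_left _ _) hsub
    have heq2 : |k - 1 - k * t| * t / (k * t * E) = |k - 1 - k * t| * Real.exp t / k := by
      rw [hE_def, Real.exp_neg]
      field_simp
    have hstep2 : |k - 1 - k * t| * Real.exp t / k ≤ (|k - 1| + k) * Real.exp 1 / k := by
      have ha : |k - 1 - k * t| ≤ |k - 1| + k := by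
        calc |k - 1 - k * t| ≤ |k - 1| + k * t := hnum
        _ ≤ |k - 1| + k := by nlinarith
      have hb : Real.exp t ≤ Real.exp 1 := Real.exp_le_exp.mpr h1
      gcongr
    have hC2 : (0:ℝ) ≤ |k - 1| / k + 1 := by positivity
    linarith [hstep, heq2 ▸ hstep, hstep2]
  · -- t ≥ 1 case
    have hstep : Gk k t ≤ |k - 1 - k * t| * E / (k * t * E) := by
      rw [hGeq]
      gcongr
      exact min_le_right _ _
    have heq2 : |k - 1 - k * t| * E / (k * t * E) = |k - 1 - k * t| / (k * t) := by
      field_simp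
    have hstep2 : |k - 1 - k * t| / (k * t) ≤ |k - 1| / k + 1 := by
      rw [div_le_iff₀ (by positivity)]
      have h2 : |k - 1| / k * (k * t) = |k - 1| * t := by field_simp
      calc |k - 1 - k * t| ≤ |k - 1| + k * t := hnum
      _ ≤ |k - 1| * t + k * t := by nlinarith [abs_nonneg (k - 1)]
      _ = (|k - 1| / k + 1) * (k * t) := by field_simp
    have hC1 : (0:ℝ) ≤ (|k - 1| + k) * Real.exp 1 / k := by positivity
    linarith [heq2 ▸ hstep, hstep2]
lemma u_tendsto_zero (lam k : ℝ) (hlam : 0 < lam) (hk : 0 < k) :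
    Tendsto (fun x : ℝ => (x / lam) ^ k) (nhdsWithin 0 (Set.Ioi 0))
      (nhdsWithin 0 (Set.Ioi 0)) := by
  have h1 : ContinuousAt (fun y : ℝ => y ^ k) 0 :=
    Real.continuousAt_rpow_const 0 k (Or.inr hk.le)
  have h2 : ContinuousAt (fun x : ℝ => (x / lam) ^ k) 0 := by
    have hq : ContinuousAt (fun x : ℝ => x / lam) 0 := (continuous_id.div_const lam).continuousAt
    have := ContinuousAt.comp (by simpa using h1) hq
    simpa [Function.comp_def] using this
  have h3 : Tendsto (fun x : ℝ => (x / lam) ^ k) (nhdsWithin 0 (Set.Ioi 0)) (nhds 0) := by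
    have := h2.tendsto.mono_left (nhdsWithin_le_nhds (s := Set.Ioi 0))
    simpa [Real.zero_rpow hk.ne'] using this
  refine tendsto_nhdsWithin_of_tendsto_nhds_of_eventually_within _ h3 ?_
  filter_upwards [self_mem_nhdsWithin] with x hx
  exact Real.rpow_pos_of_pos (div_pos hx hlam) k

lemma u_tendsto_top (lam k : ℝ) (hlam : 0 < lam) (hk : 0 < k) :
    Tendsto (fun x : ℝ => (x / lam) ^ k) atTop atTop :=
  (tendsto_rpow_atTop hk).comp (tendsto_id.atTop_div_const hlam)

/-- the function `κ_f(x) = |f'(x) min(F(x), 1-F(x)) / f(x)²|` for the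
Weibull(lam,k) density has limits `|(k-1)/k|` at `0⁺` and `1` at `∞`, and is bounded on `(0,∞)`. -/
theorem weibull_kappa_bounded (lam k : ℝ) (hlam : 0 < lam) (hk : 0 < k)
    (F f κ : ℝ → ℝ)
    (hF : ∀ x, 0 < x → F x = 1 - Real.exp (-(x / lam) ^ k))
    (hf : ∀ x, 0 < x → f x = (k / lam ^ k) * x ^ (k - 1) * Real.exp (-(x / lam) ^ k))
    (hκ : ∀ x, 0 < x → κ x = |deriv f x * min (F x) (1 - F x) / (f x) ^ 2|) :
    Tendsto κ (nhdsWithin 0 (Set.Ioi (0 : ℝ))) (nhds |(k - 1) / k|) ∧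
    Tendsto κ atTop (nhds 1) ∧
    ∃ C : ℝ, ∀ x, 0 < x → κ x ≤ C := by
  have key : ∀ x, 0 < x → κ x = Gk k ((x / lam) ^ k) :=
    fun x hx => kappa_eq lam k hlam hk F f κ hF hf hκ x hx
  refine ⟨?_, ?_, ?_⟩
  · refine ((Gk_lim_zero k hk).comp (u_tendsto_zero lam k hlam hk)).congr' ?_
    filter_upwards [self_mem_nhdsWithin] with x hx
    exact (key x hx).symm
  · refine ((Gk_lim_top k hk).comp (u_tendsto_top lam k hlam hk)).congr' ?_
    filter_upwards [eventually_gt_atTop (0:ℝ)] with x hx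
    exact (key x hx).symm
  · refine ⟨(|k - 1| + k) * Real.exp 1 / k + (|k - 1| / k + 1), fun x hx => ?_⟩
    rw [key x hx]
    exact Gk_bound k hk _ (Real.rpow_pos_of_pos (div_pos hx hlam) k)
end
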